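/- arXiv:1308.1456 — 3 statements merged into one kernel-verified Lean document; each statement's English description precedes it below -/
import Mathlib

section
/- Let $q$ be a positive integer and $\chi$ a primitive multiplicative character modulo $q$. Then for all integers $u_1, u_2, \lambda$, we have $\left|\sum_{n=1}^{q}\chi(n+u_1)\overline{\chi}(n+u_2)e^{2\pi i \lambda n/q}\right| = \left|\sum_{n=1}^{q}\chi(n+\lambda)\overline{\chi}(n)e^{2\pi i (u_1-u_2)n/q}\right|$. -/
/-!
Write `S(a, b) = ∑ₓ χ(x + a) χ⁻¹(x) ψ(b x)` with `ψ(x) = e^{2πix/q}`. The substitution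
`n ↦ n - u₂` shows that the left-hand side is `|S(u₁ - u₂, λ)|` and the right-hand side is
`|S(λ, u₁ - u₂)|`. For primitive `χ` every value of `χ⁻¹` is a normalised Gauss sum,
`τ(χ) χ⁻¹(c) = ∑_y χ(y) ψ(c y)`, so `τ(χ) S(a, b)` becomes a double sum; summing over `x` first
gives `τ(χ) ψ(-a b) conj S(b, a)`, and `τ(χ) ≠ 0`.
-/

open Finset Complex ZMod ComplexConjugate

lemma AddChar.sum_shift_mul {A R : Type*} [CommRing A] [Fintype A] [CommRing R]
    (ψ : AddChar A R) (f : A → R) (a c : A) :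
    ∑ x, f (x + a) * ψ (c * x) = ψ (-(c * a)) * ∑ x, f x * ψ (c * x) := by
  rw [mul_sum, ← Equiv.sum_comp (Equiv.addRight a) (fun x ↦ ψ (-(c * a)) * (f x * ψ (c * x)))]
  refine sum_congr rfl fun x _ ↦ ?_
  rw [Equiv.coe_addRight, mul_left_comm, ← map_add_eq_mul,
    show -(c * a) + c * (x + a) = c * x by ring]

namespace ZMod

variable {N : ℕ} [NeZero N]

lemma sum_range_natCast {M : Type*} [AddCommMonoid M] (f : ZMod N → M) :
    ∑ n ∈ range N, f n = ∑ x, f x := by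
  refine sum_nbij (↑) (fun _ _ ↦ mem_univ _) (fun a ha b hb hab ↦ ?_)
    (fun x _ ↦ ⟨x.val, mem_range.2 x.val_lt, natCast_zmod_val x⟩) (fun _ _ ↦ rfl)
  simpa [val_natCast_of_lt (mem_range.1 ha), val_natCast_of_lt (mem_range.1 hb)]
    using congrArg val hab

lemma sum_Icc_natCast {M : Type*} [AddCommMonoid M] (f : ZMod N → M) :
    ∑ n ∈ Icc 1 N, f n = ∑ x, f x := by
  rw [← Ico_add_one_right_eq_Icc, sum_Ico_eq_sum_range, add_tsub_cancel_right,
    ← Equiv.sum_comp (Equiv.addLeft 1) f]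
  simpa using sum_range_natCast (fun x ↦ f (1 + x))

lemma exp_eq_stdAddChar (m : ℤ) (n : ℕ) :
    exp (2 * Real.pi * I * m * n / N) = stdAddChar ((m : ZMod N) * (n : ZMod N)) := by
  rw [show (m : ZMod N) * (n : ZMod N) = ((m * n : ℤ) : ZMod N) by push_cast; rfl, stdAddChar_coe]
  push_cast
  ring_nf

end ZMod

namespace DirichletCharacter

variable {N : ℕ} [NeZero N]

noncomputable def twistedCorrelation {R : Type*} [CommRing R] (χ : DirichletCharacter R N)
    (ψ : AddChar (ZMod N) R) (a b : ZMod N) : R :=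
  ∑ x, χ (x + a) * χ⁻¹ x * ψ (b * x)

section IsDomain

variable {R : Type*} [CommRing R] [IsDomain R] {χ : DirichletCharacter R N}

lemma IsPrimitive.sum_mul_addChar_mul (hχ : χ.IsPrimitive) (ψ : AddChar (ZMod N) R)
    (c : ZMod N) : ∑ y, χ y * ψ (c * y) = χ⁻¹ c * gaussSum χ ψ :=
  gaussSum_mulShift_of_isPrimitive ψ hχ c

lemma IsPrimitive.gaussSum_mul_twistedCorrelation (hχ : χ.IsPrimitive)
    (ψ : AddChar (ZMod N) R) (a b : ZMod N) :
    gaussSum χ ψ * twistedCorrelation χ ψ a b =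
      gaussSum χ ψ * (ψ (-(a * b)) * twistedCorrelation χ⁻¹ ψ⁻¹ b a) := by
  calc gaussSum χ ψ * twistedCorrelation χ ψ a b
      = ∑ x, χ (x + a) * ψ (b * x) * ∑ y, χ y * ψ (x * y) := by
        rw [twistedCorrelation, mul_sum]
        refine sum_congr rfl fun x _ ↦ ?_
        rw [hχ.sum_mul_addChar_mul]
        ring
    _ = ∑ y, χ y * ∑ x, χ (x + a) * ψ ((b + y) * x) := by
        simp_rw [mul_sum]
        rw [sum_comm]
        refine sum_congr rfl fun y _ ↦ sum_congr rfl fun x _ ↦ ?_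
        rw [add_mul, AddChar.map_add_eq_mul, mul_comm x y]
        ring
    _ = ∑ y, χ y * (ψ (-((b + y) * a)) * (χ⁻¹ (b + y) * gaussSum χ ψ)) := by
        simp_rw [AddChar.sum_shift_mul ψ (fun x ↦ χ x), hχ.sum_mul_addChar_mul]
    _ = _ := by
        rw [twistedCorrelation, mul_sum, mul_sum]
        refine sum_congr rfl fun y _ ↦ ?_
        rw [inv_inv, AddChar.inv_apply, show -((b + y) * a) = -(a * b) + -(a * y) by ring,
          AddChar.map_add_eq_mul, add_comm b y]
        ring

lemma IsPrimitive.twistedCorrelation_eq_mul_inv_swap (hχ : χ.IsPrimitive)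
    {ψ : AddChar (ZMod N) R} (hτ : gaussSum χ ψ ≠ 0) (a b : ZMod N) :
    twistedCorrelation χ ψ a b = ψ (-(a * b)) * twistedCorrelation χ⁻¹ ψ⁻¹ b a :=
  mul_left_cancel₀ hτ (hχ.gaussSum_mul_twistedCorrelation ψ a b)

end IsDomain

section Complex

variable {χ : DirichletCharacter ℂ N}

lemma twistedCorrelation_inv (χ : DirichletCharacter ℂ N) (ψ : AddChar (ZMod N) ℂ)
    (a b : ZMod N) :
    twistedCorrelation χ⁻¹ ψ⁻¹ a b = conj (twistedCorrelation χ ψ a b) := by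
  simp only [twistedCorrelation, map_sum, map_mul, inv_inv, AddChar.inv_apply,
    AddChar.map_neg_eq_conj, starRingEnd_apply, MulChar.star_apply']

lemma IsPrimitive.norm_twistedCorrelation_comm (hχ : χ.IsPrimitive) {ψ : AddChar (ZMod N) ℂ}
    (hτ : gaussSum χ ψ ≠ 0) (a b : ZMod N) :
    ‖twistedCorrelation χ ψ a b‖ = ‖twistedCorrelation χ ψ b a‖ := by
  rw [hχ.twistedCorrelation_eq_mul_inv_swap hτ, twistedCorrelation_inv, norm_mul,
    AddChar.norm_apply, one_mul, norm_conj]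

lemma IsPrimitive.gaussSum_stdAddChar_ne_zero (hχ : χ.IsPrimitive) :
    gaussSum χ stdAddChar ≠ 0 := by
  intro hτ
  have hdft : 𝓕 (χ : ZMod N → ℂ) = 0 := by
    ext k
    rw [hχ.fourierTransform_eq_inv_mul_gaussSum, hτ, mul_zero, Pi.zero_apply]
  simpa using congrFun (dft.map_eq_zero_iff.mp hdft) 1

lemma sum_Icc_eq_mul_twistedCorrelation (χ : DirichletCharacter ℂ N) (u₁ u₂ m : ℤ) :
    ∑ n ∈ Icc 1 N,
        χ (((n : ℤ) + u₁ : ℤ) : ZMod N) * conj (χ (((n : ℤ) + u₂ : ℤ) : ZMod N)) *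
          exp (2 * Real.pi * I * (m : ℂ) * (n : ℂ) / (N : ℂ)) =
      stdAddChar (-((m : ZMod N) * (u₂ : ZMod N))) *
        twistedCorrelation χ stdAddChar ((u₁ - u₂ : ℤ) : ZMod N) (m : ZMod N) := by
  calc _ = ∑ x : ZMod N, χ (x + u₂ + ((u₁ - u₂ : ℤ) : ZMod N)) * χ⁻¹ (x + u₂) *
          stdAddChar ((m : ZMod N) * x) := by
        rw [← sum_Icc_natCast]
        refine sum_congr rfl fun n _ ↦ ?_
        rw [starRingEnd_apply, MulChar.star_apply', exp_eq_stdAddChar]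
        push_cast
        ring_nf
    _ = _ := AddChar.sum_shift_mul _ (fun x ↦ χ (x + ((u₁ - u₂ : ℤ) : ZMod N)) * χ⁻¹ x) _ _

end Complex

end DirichletCharacter

theorem stmt_0 (q : ℕ) (hq : 0 < q) (χ : DirichletCharacter ℂ q)
    (hχ : χ.IsPrimitive) (u₁ u₂ lam : ℤ) :
    ‖(∑ n ∈ Finset.Icc 1 q,
        χ (((n : ℤ) + u₁ : ℤ) : ZMod q) *
          (starRingEnd ℂ) (χ (((n : ℤ) + u₂ : ℤ) : ZMod q)) *
          Complex.exp (2 * Real.pi * Complex.I * (lam : ℂ) * (n : ℂ) / (q : ℂ)))‖ =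
    ‖(∑ n ∈ Finset.Icc 1 q,
        χ (((n : ℤ) + lam : ℤ) : ZMod q) *
          (starRingEnd ℂ) (χ ((n : ℤ) : ZMod q)) *
          Complex.exp (2 * Real.pi * Complex.I * ((u₁ - u₂ : ℤ) : ℂ) * (n : ℂ) / (q : ℂ)))‖ := by
  have : NeZero q := ⟨hq.ne'⟩
  have hrhs := DirichletCharacter.sum_Icc_eq_mul_twistedCorrelation χ lam 0 (u₁ - u₂)
  simp only [add_zero, Int.cast_zero, sub_zero, mul_zero, neg_zero, AddChar.map_zero_eq_one,
    one_mul] at hrhs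
  rw [DirichletCharacter.sum_Icc_eq_mul_twistedCorrelation, hrhs, norm_mul, AddChar.norm_apply,
    one_mul, Int.cast_sub]
  exact hχ.norm_twistedCorrelation_comm hχ.gaussSum_stdAddChar_ne_zero _ _
end

section
/- Let $q$ be a positive integer, $\chi$ a primitive character modulo $q$, and $M, N, a$ integers with $\gcd(a,q)=1$, $N \ge 1$. Then there is an absolute constant $C$ such that $\left|\sum_{\substack{M < n \le M+N \\ \gcd(n,q)=1}} \chi(n+a)\right| \le C\tau(q)\left(q^{1/2}\log q + Nq^{-1/2}\right)$, where $\tau(q)$ is the number of divisors of $q$. -/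
/-!
Detect `gcd(n, q) = 1` by Möbius inversion, which reduces the sum to sums of `χ(n + a)` over the
multiples `n = m d` of each divisor `d ∣ q`. For primitive `χ` the finite Fourier expansion
`χ(x) = τ(χ)/q · ∑ₖ χ̄(-k) e(kx/q)` with `|τ(χ)| = √q` turns such a sum into incomplete geometric
sums in `e(kd/q)`. The `d` residues `k` with `q ∣ kd` contribute the length of the progression; the
remaining ones run `d` times over the nonzero residues modulo `q/d`, and
`∑_{0<r<Q} 1/sin(πr/Q) ≤ Q(1 + log Q)` bounds their total by `q(1 + log q)`.
-/

open Finset Real ZMod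
open scoped ArithmeticFunction.Moebius

lemma one_sub_mul_sum_Ioc_zpow {K : Type*} [Field K] {z : K} (hz : z ≠ 0) {A B : ℤ}
    (hAB : A ≤ B) :
    (1 - z) * ∑ m ∈ Ioc A B, z ^ m = z ^ (A + 1) - z ^ (B + 1) := by
  induction B, hAB using Int.leInduction with
  | base => simp
  | succ B hAB ih =>
    rw [← Order.succ_eq_add_one, ← insert_Ioc_right_eq_Ioc_succ hAB, sum_insert (by simp),
      Order.succ_eq_add_one, mul_add, ih, zpow_add_one₀ hz (B + 1)]
    ring

lemma norm_sum_Ioc_zpow_le {K : Type*} [NormedField K] {z : K} (hz : ‖z‖ = 1) (hz1 : z ≠ 1)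
    (A B : ℤ) :
    ‖∑ m ∈ Ioc A B, z ^ m‖ ≤ 2 / ‖1 - z‖ := by
  have hz0 : z ≠ 0 := norm_ne_zero_iff.mp (by simp [hz])
  have hpos : 0 < ‖1 - z‖ := norm_pos_iff.mpr (sub_ne_zero.mpr (Ne.symm hz1))
  rcases lt_or_ge B A with hBA | hAB
  · simp [Ioc_eq_empty_of_le hBA.le]; positivity
  rw [le_div_iff₀' hpos, ← norm_mul, one_sub_mul_sum_Ioc_zpow hz0 hAB]
  calc ‖z ^ (A + 1) - z ^ (B + 1)‖ ≤ ‖z ^ (A + 1)‖ + ‖z ^ (B + 1)‖ := norm_sub_le _ _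
    _ = 2 := by simp [norm_zpow, hz]; norm_num

lemma two_mul_min_le_sin_pi_mul {x : ℝ} (h0 : 0 ≤ x) (h1 : x ≤ 1) :
    2 * min x (1 - x) ≤ sin (π * x) := by
  wlog hx : x ≤ 1 / 2 generalizing x
  · have := this (x := 1 - x) (by linarith) (by linarith) (by linarith)
    rwa [sub_sub_cancel, min_comm, mul_sub, mul_one, sin_pi_sub] at this
  calc 2 * min x (1 - x) = 2 / π * (π * x) := by
        rw [min_eq_left (by linarith)]; field_simp
    _ ≤ sin (π * x) := mul_le_sin (by positivity) (by nlinarith [pi_pos])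

lemma one_div_sin_pi_mul_div_le {r Q : ℕ} (hr : 0 < r) (hrQ : r < Q) :
    1 / sin (π * r / Q) ≤ Q / 2 * (1 / r + 1 / (Q - r : ℕ)) := by
  have hr0 : (0 : ℝ) < r := by exact_mod_cast hr
  have hQr : (0 : ℝ) < (Q - r : ℕ) := by exact_mod_cast Nat.sub_pos_of_lt hrQ
  have hQ : (0 : ℝ) < Q := by exact_mod_cast hr.trans hrQ
  have hsin := two_mul_min_le_sin_pi_mul (x := r / Q) (by positivity)
    ((div_le_one hQ).mpr (by exact_mod_cast hrQ.le))
  have hreflect : 1 - r / Q = ((Q - r : ℕ) : ℝ) / Q := by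
    rw [Nat.cast_sub hrQ.le, sub_div, div_self hQ.ne']
  rw [hreflect, min_div_div_right hQ.le, ← mul_div_assoc, ← mul_div_assoc] at hsin
  have hmin : 1 / min (r : ℝ) (Q - r : ℕ) ≤ 1 / r + 1 / (Q - r : ℕ) := by
    rcases min_choice (r : ℝ) (Q - r : ℕ) with h | h <;> rw [h] <;>
      linarith [one_div_pos.mpr hr0, one_div_pos.mpr hQr]
  calc 1 / sin (π * r / Q) ≤ 1 / (2 * min (r : ℝ) (Q - r : ℕ) / Q) :=
        one_div_le_one_div_of_le (by positivity) hsin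
    _ = Q / 2 * (1 / min (r : ℝ) (Q - r : ℕ)) := by field_simp
    _ ≤ _ := by gcongr

lemma sum_Ico_inv_sin_le (Q : ℕ) :
    ∑ r ∈ Ico 1 Q, 1 / sin (π * r / Q) ≤ Q * (1 + log Q) := by
  have hharmonic : ∑ r ∈ Ico 1 Q, (1 / r : ℝ) ≤ 1 + log Q := by
    calc ∑ r ∈ Ico 1 Q, (1 / r : ℝ) ≤ ∑ r ∈ Icc 1 Q, (1 / r : ℝ) :=
          sum_le_sum_of_subset_of_nonneg Ico_subset_Icc_self fun _ _ _ => by positivity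
      _ = harmonic Q := by simp [harmonic_eq_sum_Icc]
      _ ≤ 1 + log Q := harmonic_le_one_add_log Q
  have hreflect : ∑ r ∈ Ico 1 Q, (1 / (Q - r : ℕ) : ℝ) = ∑ r ∈ Ico 1 Q, (1 / r : ℝ) := by
    simpa using sum_Ico_reflect (fun r => (1 / r : ℝ)) 1 (Nat.le_succ Q)
  calc ∑ r ∈ Ico 1 Q, 1 / sin (π * r / Q)
      ≤ ∑ r ∈ Ico 1 Q, Q / 2 * (1 / r + 1 / (Q - r : ℕ) : ℝ) := sum_le_sum fun r hr =>
        one_div_sin_pi_mul_div_le (mem_Ico.mp hr).1 (mem_Ico.mp hr).2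
    _ = Q * ∑ r ∈ Ico 1 Q, (1 / r : ℝ) := by rw [← mul_sum, sum_add_distrib, hreflect]; ring
    _ ≤ Q * (1 + log Q) := by gcongr

lemma sum_range_mul_mod {M : Type*} [AddCommMonoid M] (g : ℕ → M) (d Q : ℕ) :
    ∑ i ∈ range (d * Q), g (i % Q) = d • ∑ r ∈ range Q, g r := by
  induction d with
  | zero => simp
  | succ d ih =>
    rw [Nat.succ_mul, sum_range_add, ih, succ_nsmul]
    congr 1
    exact sum_congr rfl fun r hr => by
      rw [Nat.add_comm, Nat.add_mul_mod_self_right, Nat.mod_eq_of_lt (mem_range.mp hr)]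

lemma Int.mul_card_Ioc_filter_dvd_le {d : ℤ} (hd : 0 < d) {a b : ℤ} (hab : a ≤ b) :
    d * #{x ∈ Ioc a b | d ∣ x} ≤ b - a + d := by
  have hdQ : (0 : ℚ) < d := by exact_mod_cast hd
  have hfloor : d * (⌊(b : ℚ) / d⌋ - ⌊(a : ℚ) / d⌋) < b - a + d := by
    have hb := (le_div_iff₀ hdQ).mp (Int.floor_le ((b : ℚ) / d))
    have ha := (div_lt_iff₀ hdQ).mp (Int.lt_floor_add_one ((a : ℚ) / d))
    have : (d : ℚ) * (⌊(b : ℚ) / d⌋ - ⌊(a : ℚ) / d⌋) < b - a + d := by nlinarith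
    exact_mod_cast this
  rw [Int.Ioc_filter_dvd_card a b hd]
  rcases max_choice (⌊(b : ℚ) / d⌋ - ⌊(a : ℚ) / d⌋) 0 with h | h <;> rw [h] <;> linarith

lemma sum_moebius_filter_dvd_eq_ite {R : Type*} [Ring R] {q : ℕ} (hq : q ≠ 0) (n : ℤ) :
    ∑ d ∈ q.divisors with ((d : ℕ) : ℤ) ∣ n, (μ d : R) = if Int.gcd n q = 1 then 1 else 0 := by
  have hdiv : {d ∈ q.divisors | ((d : ℕ) : ℤ) ∣ n} = (Int.gcd n q).divisors := by
    ext d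
    simp only [mem_filter, Nat.mem_divisors, Int.gcd_eq_natAbs, Int.natAbs_natCast,
      Nat.dvd_gcd_iff, ← Int.natCast_dvd]
    have := (Nat.gcd_pos_of_pos_right n.natAbs (Nat.pos_of_ne_zero hq)).ne'
    tauto
  rw [hdiv]
  have := congrArg (· (Int.gcd n q)) (ArithmeticFunction.coe_moebius_mul_coe_zeta (R := R))
  simp only [ArithmeticFunction.coe_mul_zeta_apply, ArithmeticFunction.one_apply] at this
  simpa using this

lemma sum_filter_gcd_eq_one_eq_sum_moebius {R : Type*} [Ring R] {q : ℕ} (hq : q ≠ 0)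
    (s : Finset ℤ) (f : ℤ → R) :
    ∑ n ∈ s with Int.gcd n q = 1, f n =
      ∑ d ∈ q.divisors, (μ d : R) * ∑ n ∈ s with ((d : ℕ) : ℤ) ∣ n, f n := by
  simp_rw [sum_filter, mul_sum]
  rw [sum_comm]
  refine sum_congr rfl fun n _ => ?_
  rw [← boole_mul, ← sum_moebius_filter_dvd_eq_ite hq n, sum_filter, sum_mul]
  simp only [ite_mul, mul_ite, zero_mul, mul_zero]

namespace ZMod

variable {N : ℕ} [NeZero N]

lemma sum_eq_sum_range {M : Type*} [AddCommMonoid M] (F : ZMod N → M) :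
    ∑ k, F k = ∑ i ∈ range N, F i := by
  obtain ⟨n, rfl⟩ := Nat.exists_eq_add_one_of_ne_zero (NeZero.ne N)
  rw [← Fin.sum_univ_eq_sum_range (fun i => F i)]
  exact sum_congr rfl fun i _ => congrArg F (natCast_zmod_val i).symm

lemma sum_mul_natCast_eq {M : Type*} [AddCommMonoid M] {d Q : ℕ} (h : d * Q = N)
    (F : ZMod N → M) : ∑ k, F (k * d) = d • ∑ r ∈ range Q, F ((d * r : ℕ) : ZMod N) := by
  have hcast : ∀ i : ℕ, (i : ZMod N) * d = ((d * (i % Q) : ℕ) : ZMod N) := by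
    intro i
    have : i * d = d * (i % Q) + N * (i / Q) := by
      rw [← h]; nth_rw 1 [← Nat.mod_add_div i Q]; ring
    rw [← Nat.cast_mul, this, Nat.cast_add, Nat.cast_mul N, natCast_self, zero_mul, add_zero]
  calc ∑ k, F (k * d) = ∑ i ∈ range (d * Q), F ((d * (i % Q) : ℕ) : ZMod N) := by
        rw [sum_eq_sum_range, h]; simp only [hcast]
    _ = _ := sum_range_mul_mod (fun r => F ((d * r : ℕ) : ZMod N)) d Q

lemma norm_stdAddChar (c : ZMod N) : ‖stdAddChar c‖ = 1 := by
  rw [stdAddChar_apply]; exact Circle.norm_coe _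

lemma norm_one_sub_stdAddChar_intCast (j : ℤ) :
    ‖1 - stdAddChar (j : ZMod N)‖ = 2 * |sin (π * j / N)| := by
  rw [stdAddChar_coe, norm_sub_rev,
    show 2 * π * Complex.I * j / N = Complex.I * ((2 * π * j / N : ℝ) : ℂ) by push_cast; ring,
    Complex.norm_exp_I_mul_ofReal_sub_one, norm_mul, Real.norm_eq_abs, Real.norm_eq_abs,
    abs_two]
  congr 3; ring

lemma norm_sum_Ioc_stdAddChar_zpow_le {j : ℤ} (hj : sin (π * j / N) ≠ 0) (A B : ℤ) :
    ‖∑ m ∈ Ioc A B, stdAddChar (j : ZMod N) ^ m‖ ≤ 1 / |sin (π * j / N)| := by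
  have hne : stdAddChar (j : ZMod N) ≠ 1 := by
    intro h
    have := norm_one_sub_stdAddChar_intCast (N := N) j
    rw [h, sub_self, norm_zero] at this
    exact hj (abs_eq_zero.mp (by linarith))
  calc _ ≤ 2 / ‖1 - stdAddChar (j : ZMod N)‖ := norm_sum_Ioc_zpow_le (norm_stdAddChar _) hne A B
    _ = 1 / |sin (π * j / N)| := by
      rw [norm_one_sub_stdAddChar_intCast, div_mul_cancel_left₀ two_ne_zero, one_div]

lemma sum_norm_sum_Ioc_stdAddChar_mul_le {d : ℕ} (hd : d ∣ N) (A B : ℤ) :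
    ∑ k : ZMod N, ‖∑ m ∈ Ioc A B, stdAddChar (k * (d : ZMod N)) ^ m‖ ≤
      d * #(Ioc A B) + N * (1 + log N) := by
  obtain ⟨Q, hQ⟩ := hd
  have hdQ : d * Q ≠ 0 := hQ ▸ NeZero.ne N
  have hQ0 : 0 < Q := Nat.pos_of_ne_zero (right_ne_zero_of_mul hdQ)
  have hQR : (0 : ℝ) < Q := by exact_mod_cast hQ0
  set F : ZMod N → ℝ := fun c => ‖∑ m ∈ Ioc A B, stdAddChar c ^ m‖
  have hzero : F ((d * 0 : ℕ) : ZMod N) = #(Ioc A B) := by simp [F]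
  have hnonzero : ∀ r ∈ Ico 1 Q, F ((d * r : ℕ) : ZMod N) ≤ 1 / sin (π * r / Q) := by
    intro r hr
    obtain ⟨hr1, hrQ⟩ := mem_Ico.mp hr
    have hangle : π * ((d * r : ℕ) : ℤ) / N = π * r / Q := by
      have hd0 : (d : ℝ) ≠ 0 := by exact_mod_cast left_ne_zero_of_mul hdQ
      rw [hQ]; push_cast; field_simp
    have hsin : 0 < sin (π * r / Q) := by
      apply sin_pos_of_pos_of_lt_pi (by positivity)
      rw [div_lt_iff₀ hQR, mul_lt_mul_iff_right₀ pi_pos]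
      exact_mod_cast hrQ
    have := norm_sum_Ioc_stdAddChar_zpow_le (N := N) (hangle ▸ hsin.ne') A B
    rwa [hangle, abs_of_pos hsin, Int.cast_natCast] at this
  have hlog : log Q ≤ log N := log_le_log hQR <| by
    exact_mod_cast Nat.le_of_dvd (Nat.pos_of_neZero N) (Dvd.intro_left d hQ.symm)
  calc ∑ k : ZMod N, F (k * d) = d • ∑ r ∈ range Q, F ((d * r : ℕ) : ZMod N) :=
        sum_mul_natCast_eq hQ.symm F
    _ = d * (#(Ioc A B) + ∑ r ∈ Ico 1 Q, F ((d * r : ℕ) : ZMod N)) := by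
        rw [range_eq_Ico, sum_eq_sum_Ico_succ_bot hQ0, hzero, nsmul_eq_mul]
    _ ≤ d * (#(Ioc A B) + Q * (1 + log Q)) := by
        gcongr
        exact (sum_le_sum hnonzero).trans (sum_Ico_inv_sin_le Q)
    _ = d * #(Ioc A B) + N * (1 + log Q) := by
        rw [show (N : ℝ) = d * Q by exact_mod_cast hQ]; ring
    _ ≤ d * #(Ioc A B) + N * (1 + log N) := by gcongr

end ZMod

namespace DirichletCharacter.IsPrimitive

variable {q : ℕ} [NeZero q] {χ : DirichletCharacter ℂ q}

lemma apply_eq_gaussSum_mul_sum (hχ : χ.IsPrimitive) (x : ZMod q) :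
    χ x = (q : ℂ)⁻¹ * gaussSum χ stdAddChar * ∑ k, χ⁻¹ (-k) * stdAddChar (k * x) := by
  rw [← LinearEquiv.symm_apply_apply 𝓕 (χ : ZMod q → ℂ), invDFT_apply]
  simp only [smul_eq_mul, hχ.fourierTransform_eq_inv_mul_gaussSum, mul_sum]
  exact sum_congr rfl fun k _ => by ring

lemma norm_gaussSum (hχ : χ.IsPrimitive) : ‖gaussSum χ stdAddChar‖ = √q := by
  have hmul : gaussSum χ stdAddChar * star (gaussSum χ stdAddChar) = q := by
    -- `𝓕 (𝓕 χ) (-1) = q χ(1)`, and `𝓕 χ = χ⁻¹(-·) τ(χ)` makes the left side `τ(χ) · τ(χ)‾`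
    have h := congrFun (dft_dft (χ : ZMod q → ℂ)) (-1)
    simp only [dft_apply, hχ.fourierTransform_eq_inv_mul_gaussSum, smul_eq_mul, neg_neg,
      map_one, mul_one] at h
    rw [star_gaussSum_eq, ← h, mul_comm, gaussSum, sum_mul, ← Equiv.sum_comp (Equiv.neg (ZMod q))]
    refine sum_congr rfl fun x _ => ?_
    simp only [Equiv.neg_apply, AddChar.inv_apply, neg_neg, mul_neg_one]
    ring
  rw [← sqrt_sq (norm_nonneg _)]
  congr 1
  rw [Complex.star_def, Complex.mul_conj, Complex.normSq_eq_norm_sq] at hmul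
  exact_mod_cast hmul

lemma norm_sum_Ioc_apply_mul_add_le_sum (hχ : χ.IsPrimitive) (d a A B : ℤ) :
    ‖∑ m ∈ Ioc A B, χ ((m * d + a : ℤ) : ZMod q)‖ ≤
      (√q)⁻¹ * ∑ k : ZMod q, ‖∑ m ∈ Ioc A B, stdAddChar (k * (d : ZMod q)) ^ m‖ := by
  have hexpand : ∀ m : ℤ, χ ((m * d + a : ℤ) : ZMod q) = (q : ℂ)⁻¹ * gaussSum χ stdAddChar *
      ∑ k, χ⁻¹ (-k) * stdAddChar (k * (a : ZMod q)) * stdAddChar (k * (d : ZMod q)) ^ m := by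
    intro m
    rw [hχ.apply_eq_gaussSum_mul_sum]
    congr 1
    refine sum_congr rfl fun k _ => ?_
    rw [← AddChar.map_zsmul_eq_zpow, mul_assoc, ← AddChar.map_add_eq_mul, zsmul_eq_mul]
    congr 2
    push_cast
    ring
  simp_rw [hexpand, ← mul_sum]
  rw [sum_comm]
  simp_rw [← mul_sum]
  rw [norm_mul, norm_mul, hχ.norm_gaussSum, norm_inv, Complex.norm_natCast,
    inv_mul_eq_div, sqrt_div_self]
  gcongr
  refine (norm_sum_le _ _).trans (sum_le_sum fun k _ => ?_)
  rw [norm_mul, norm_mul, norm_stdAddChar, mul_one]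
  exact mul_le_of_le_one_left (norm_nonneg _) (DirichletCharacter.norm_le_one _ _)

lemma norm_sum_Ioc_apply_mul_add_le (hχ : χ.IsPrimitive) {d : ℕ} (hd : d ∣ q) (a A B : ℤ) :
    ‖∑ m ∈ Ioc A B, χ ((m * d + a : ℤ) : ZMod q)‖ ≤ (d * #(Ioc A B) + q * (1 + log q)) / √q := by
  refine (hχ.norm_sum_Ioc_apply_mul_add_le_sum d a A B).trans ?_
  rw [inv_mul_eq_div]
  gcongr
  simpa using sum_norm_sum_Ioc_stdAddChar_mul_le hd A B

lemma norm_sum_Ioc_filter_dvd_le (hχ : χ.IsPrimitive) {d : ℕ} (hd : d ∣ q) (a M N : ℤ)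
    (hN : 0 ≤ N) :
    ‖∑ n ∈ Ioc M (M + N) with ((d : ℕ) : ℤ) ∣ n, χ ((n + a : ℤ) : ZMod q)‖ ≤
      (N + q * (2 + log q)) / √q := by
  have hd0 : (0 : ℤ) < d := by exact_mod_cast Nat.pos_of_dvd_of_pos hd (Nat.pos_of_neZero q)
  have hcard := Int.mul_card_Ioc_filter_dvd_le hd0 (le_add_of_nonneg_right hN : M ≤ M + N)
  rw [Int.Ioc_filter_dvd_eq _ _ hd0, card_map, add_sub_cancel_left] at hcard
  rw [Int.Ioc_filter_dvd_eq _ _ hd0, sum_map]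
  refine (hχ.norm_sum_Ioc_apply_mul_add_le hd a _ _).trans ?_
  generalize #(Ioc (_ : ℤ) _) = c at hcard ⊢
  have hcardR : (d : ℝ) * c ≤ N + d := by exact_mod_cast hcard
  have hdq : (d : ℝ) ≤ q := by exact_mod_cast Nat.le_of_dvd (Nat.pos_of_neZero q) hd
  gcongr ?_ / _
  linarith

end DirichletCharacter.IsPrimitive

lemma div_sqrt_le_four_mul {q : ℕ} (hq : 0 < q) {N : ℝ} (hN : 1 ≤ N) :
    (N + q * (2 + log q)) / √q ≤ 4 * (√q * log q + N / √q) := by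
  have hsq : 0 < √(q : ℝ) := sqrt_pos.mpr (by exact_mod_cast hq)
  have hq2 : 2 * (q : ℝ) ≤ 3 * (q * log q) + 3 * N := by
    rcases Nat.lt_or_ge q 2 with h | h
    · obtain rfl : q = 1 := by omega
      simp; linarith
    · have : log 2 ≤ log q := log_le_log two_pos (by exact_mod_cast h)
      nlinarith [log_two_gt_d9, (by exact_mod_cast h : (2 : ℝ) ≤ q)]
  have hexpand : 4 * (√q * log q + N / √q) * √q = 4 * (q * log q) + 4 * N := by
    rw [mul_assoc, add_mul, div_mul_cancel₀ _ hsq.ne', mul_right_comm,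
      mul_self_sqrt (Nat.cast_nonneg _)]
    ring
  rw [div_le_iff₀ hsq, hexpand]
  linarith

theorem stmt_5 :
    ∃ C : ℝ, 0 < C ∧ ∀ (q : ℕ), 0 < q → ∀ (χ : DirichletCharacter ℂ q), χ.IsPrimitive →
      ∀ (M N a : ℤ), Int.gcd a q = 1 → 1 ≤ N →
        ‖∑ n ∈ (Finset.Ioc M (M + N)).filter (fun n => Int.gcd n q = 1),
            χ ((n + a : ℤ) : ZMod q)‖ ≤
          C * (q.divisors.card : ℝ) * (Real.sqrt q * Real.log q + (N : ℝ) / Real.sqrt q) := by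
  refine ⟨4, by norm_num, fun q hq χ hχ M N a _ hN => ?_⟩
  have : NeZero q := ⟨hq.ne'⟩
  rw [sum_filter_gcd_eq_one_eq_sum_moebius hq.ne']
  calc _ ≤ ∑ d ∈ q.divisors,
          ‖∑ n ∈ Ioc M (M + N) with ((d : ℕ) : ℤ) ∣ n, χ ((n + a : ℤ) : ZMod q)‖ := by
        refine (norm_sum_le _ _).trans (sum_le_sum fun d _ => ?_)
        rw [norm_mul, Complex.norm_intCast]
        exact mul_le_of_le_one_left (norm_nonneg _) <| by
          exact_mod_cast ArithmeticFunction.abs_moebius_le_one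
    _ ≤ ∑ d ∈ q.divisors, (N + q * (2 + log q)) / √q := sum_le_sum fun d hd =>
        hχ.norm_sum_Ioc_filter_dvd_le (Nat.dvd_of_mem_divisors hd) a M N (by omega)
    _ ≤ 4 * q.divisors.card * (√q * log q + N / √q) := by
        rw [sum_const, nsmul_eq_mul, mul_comm 4, mul_assoc]
        gcongr
        exact div_sqrt_le_four_mul hq (by exact_mod_cast hN)
end

section
/- Let $q$ be a positive integer, $V \ge 1$, and for each quadruple $(v_1,v_2,v_3,v_4)$ with $1 \le v_i \le V$ containing at least three distinct values, let $A'_i = \prod_{j \ne i}(v_i - v_j)$. Then for every $\varepsilon > 0$ there is $C(\varepsilon)$ with $\sum' \sum_{\substack{1 \le i \le 4 \\ A'_i \ne 0}} \gcd(A'_i, q) \le C(\varepsilon) V^4 q^{\varepsilon}$, where $\sum'$ runs over all such restricted quadruples. -/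
/-!
Since `gcd(∏ⱼ aⱼ, q) ≤ ∏ⱼ gcd(aⱼ, q)`, each term `gcd(A'ᵢ, q)` is at most
`∏_{j ≠ i} gcd(vᵢ - vⱼ, q)`. Summing over the quadruple with `vᵢ` fixed, this factors into the
cube of the row sum `∑_{n ≠ v} gcd(v - n, q) ≤ 2 ∑_{m ≤ V} gcd(m, q) ≤ 2 V τ(q)`.
The total is therefore at most `32 V⁴ τ(q)³`, and the divisor bound `τ(q) ≪_ε q^ε` concludes.
-/

open Finset

lemma natCast_succ_le_rpow_pow {x ε : ℝ} (hx₀ : 0 ≤ x) (hx : 2 ≤ x ^ ε) (a : ℕ) :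
    (a + 1 : ℝ) ≤ (x ^ a) ^ ε := by
  rw [← Real.rpow_pow_comm hx₀]
  calc (a + 1 : ℝ) ≤ 2 ^ a := by exact_mod_cast Nat.lt_two_pow_self
    _ ≤ (x ^ ε) ^ a := pow_le_pow_left₀ zero_le_two hx a

lemma exists_natCast_succ_le_mul_rpow_pow {ε : ℝ} (hε : 0 < ε) :
    ∃ K : ℝ, 1 ≤ K ∧ ∀ x : ℝ, 2 ≤ x → ∀ a : ℕ, (a + 1 : ℝ) ≤ K * (x ^ a) ^ ε := by
  -- Bernoulli: `(x ^ ε) ^ a ≥ (1 + δ) ^ a ≥ 1 + a δ`, where `2 ^ ε = 1 + δ`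
  set δ := (2 : ℝ) ^ ε - 1
  have hδ : 0 < δ := sub_pos.2 (Real.one_lt_rpow one_lt_two hε)
  refine ⟨max 1 δ⁻¹, le_max_left _ _, fun x hx a => ?_⟩
  have hKδ : 1 ≤ max 1 δ⁻¹ * δ := by
    calc (1 : ℝ) = δ⁻¹ * δ := (inv_mul_cancel₀ hδ.ne').symm
      _ ≤ max 1 δ⁻¹ * δ := by gcongr; exact le_max_right _ _
  calc (a + 1 : ℝ) ≤ max 1 δ⁻¹ * (1 + a * δ) := by
        nlinarith [le_max_left 1 δ⁻¹, (Nat.cast_nonneg a : (0 : ℝ) ≤ a)]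
    _ ≤ max 1 δ⁻¹ * (1 + δ) ^ a := by
        gcongr
        exact one_add_mul_le_pow (by linarith) a
    _ ≤ max 1 δ⁻¹ * (x ^ a) ^ ε := by
        rw [add_sub_cancel, ← Real.rpow_pow_comm (by linarith)]
        gcongr

theorem card_divisors_le_mul_rpow {ε : ℝ} (hε : 0 < ε) :
    ∃ C : ℝ, 0 < C ∧ ∀ n : ℕ, n ≠ 0 → (#n.divisors : ℝ) ≤ C * (n : ℝ) ^ ε := by
  obtain ⟨K, hK, hsucc⟩ := exists_natCast_succ_le_mul_rpow_pow hε
  set N := ⌈(2 : ℝ) ^ ε⁻¹⌉₊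
  have hlarge : ∀ p : ℕ, N ≤ p → 2 ≤ (p : ℝ) ^ ε := fun p hp => by
    calc (2 : ℝ) = ((2 : ℝ) ^ ε⁻¹) ^ ε := by
          rw [← Real.rpow_mul zero_le_two, inv_mul_cancel₀ hε.ne', Real.rpow_one]
      _ ≤ (p : ℝ) ^ ε := by gcongr; exact (Nat.le_ceil _).trans (by exact_mod_cast hp)
  refine ⟨K ^ N, by positivity, fun n hn => ?_⟩
  -- only the primes below `N` pay the constant `K` in `a + 1 ≤ K (p ^ a) ^ ε`
  have hfactor : ∀ p ∈ n.primeFactors, ((n.factorization p + 1 : ℕ) : ℝ) ≤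
      (if p < N then K else 1) * ((p : ℝ) ^ n.factorization p) ^ ε := fun p hp => by
    push_cast
    split_ifs with hpN
    · exact hsucc p (by exact_mod_cast (Nat.prime_of_mem_primeFactors hp).two_le) _
    · rw [one_mul]
      exact natCast_succ_le_rpow_pow (by positivity) (hlarge p (not_lt.1 hpN)) _
  have hsmall : ∏ p ∈ n.primeFactors, (if p < N then K else 1) ≤ K ^ N := by
    rw [prod_ite, prod_const_one, mul_one, prod_const]
    exact pow_le_pow_right₀ hK <| (card_le_card fun p hp => mem_range.2 (mem_filter.1 hp).2).trans
      (card_range N).le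
  calc (#n.divisors : ℝ) = ∏ p ∈ n.primeFactors, ((n.factorization p + 1 : ℕ) : ℝ) := by
        rw [Nat.card_divisors hn, Nat.cast_prod]
    _ ≤ ∏ p ∈ n.primeFactors, (if p < N then K else 1) * ((p : ℝ) ^ n.factorization p) ^ ε :=
        prod_le_prod (fun _ _ => by positivity) hfactor
    _ = (∏ p ∈ n.primeFactors, (if p < N then K else 1)) * (n : ℝ) ^ ε := by
        rw [prod_mul_distrib, Real.finsetProd_rpow _ _ (fun _ _ => by positivity)]
        congr 2
        exact_mod_cast Nat.prod_factorization_pow_eq_self hn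
    _ ≤ K ^ N * (n : ℝ) ^ ε := by gcongr

theorem Nat.sum_Icc_gcd_le {q : ℕ} (hq : q ≠ 0) (V : ℕ) :
    ∑ m ∈ Icc 1 V, m.gcd q ≤ V * #q.divisors := by
  have hmaps : ∀ m ∈ Ioc 0 V, m.gcd q ∈ q.divisors :=
    fun m _ => Nat.mem_divisors.2 ⟨Nat.gcd_dvd_right m q, hq⟩
  -- the fibre over a divisor `d` consists of multiples of `d`, of which there are `V / d`
  have hfibre : ∀ d ∈ q.divisors, ∑ m ∈ Ioc 0 V with m.gcd q = d, m.gcd q ≤ V := fun d _ => by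
    calc ∑ m ∈ Ioc 0 V with m.gcd q = d, m.gcd q = #{m ∈ Ioc 0 V | m.gcd q = d} * d := by
          rw [sum_congr rfl fun m hm => (mem_filter.1 hm).2, sum_const, smul_eq_mul]
      _ ≤ #{m ∈ Ioc 0 V | d ∣ m} * d := by
          gcongr with m
          exact fun h => h ▸ Nat.gcd_dvd_left m q
      _ = V / d * d := by rw [Nat.Ioc_filter_dvd_card_eq_div]
      _ ≤ V := Nat.div_mul_le_self V d
  calc ∑ m ∈ Icc 1 V, m.gcd q = ∑ d ∈ q.divisors, ∑ m ∈ Ioc 0 V with m.gcd q = d, m.gcd q :=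
        (sum_fiberwise_of_maps_to hmaps _).symm
    _ ≤ ∑ _d ∈ q.divisors, V := sum_le_sum hfibre
    _ = V * #q.divisors := by rw [sum_const, smul_eq_mul, mul_comm]

theorem Finset.sum_comp_le_sum_of_injOn {α β : Type*} {s : Finset α} {t : Finset β} {g : α → β}
    (f : β → ℕ) (hmaps : ∀ a ∈ s, g a ∈ t) (hinj : Set.InjOn g s) :
    ∑ a ∈ s, f (g a) ≤ ∑ b ∈ t, f b := by
  classical
  rw [← sum_image hinj]
  exact sum_le_sum_of_subset (image_subset_iff.2 hmaps)

def offDiagGcd (q : ℕ) (a b : ℤ) : ℕ := if a = b then 0 else Int.gcd (a - b) q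

lemma offDiagGcd_natCast (q a b : ℕ) :
    offDiagGcd q a b =
      (if b < a then (a - b).gcd q else 0) + if a < b then (b - a).gcd q else 0 := by
  rcases lt_trichotomy a b with h | rfl | h
  · rw [offDiagGcd, if_neg (by omega), if_neg h.not_gt, if_pos h, zero_add, ← Int.neg_gcd, neg_sub,
      ← Nat.cast_sub h.le, Int.gcd_natCast_natCast]
  · simp [offDiagGcd]
  · rw [offDiagGcd, if_neg (by omega), if_pos h, if_neg h.not_gt, add_zero,
      ← Nat.cast_sub h.le, Int.gcd_natCast_natCast]

theorem sum_offDiagGcd_le {q V v : ℕ} (hv : v ≤ V) :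
    ∑ n ∈ Icc 1 V, offDiagGcd q v n ≤ 2 * ∑ m ∈ Icc 1 V, m.gcd q := by
  have below : ∑ n ∈ Icc 1 V with n < v, (v - n).gcd q ≤ ∑ m ∈ Icc 1 V, m.gcd q :=
    sum_comp_le_sum_of_injOn (g := (v - ·)) (·.gcd q) (fun n hn => by simp only [mem_filter, mem_Icc] at hn ⊢; omega)
      (fun a ha b hb h => by simp only [coe_filter, mem_Icc, Set.mem_ofPred_eq] at ha hb h; omega)
  have above : ∑ n ∈ Icc 1 V with v < n, (n - v).gcd q ≤ ∑ m ∈ Icc 1 V, m.gcd q :=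
    sum_comp_le_sum_of_injOn (g := (· - v)) (·.gcd q) (fun n hn => by simp only [mem_filter, mem_Icc] at hn ⊢; omega)
      (fun a ha b hb h => by simp only [coe_filter, mem_Icc, Set.mem_ofPred_eq] at ha hb h; omega)
  simp only [offDiagGcd_natCast, sum_add_distrib, ← sum_filter]
  omega

theorem Int.gcd_prod_dvd_prod_gcd {ι : Type*} (s : Finset ι) (f : ι → ℤ) (q : ℕ) :
    Int.gcd (∏ j ∈ s, f j) q ∣ ∏ j ∈ s, Int.gcd (f j) q := by
  classical
  induction s using Finset.induction_on with
  | empty => simp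
  | insert a s ha ih =>
    rw [prod_insert ha, prod_insert ha]
    exact (Int.gcd_mul_left_dvd_mul_gcd q _ _).trans (mul_dvd_mul_left _ ih)

theorem gcd_prod_sub_le_prod_offDiagGcd {ι : Type*} [Fintype ι] [DecidableEq ι] {q : ℕ} (hq : q ≠ 0)
    (v : ι → ℤ) (i : ι) (h : ∏ j ∈ univ.erase i, (v i - v j) ≠ 0) :
    Int.gcd (∏ j ∈ univ.erase i, (v i - v j)) q ≤ ∏ j ∈ univ.erase i, offDiagGcd q (v i) (v j) := by
  have hoff : ∀ j ∈ univ.erase i, offDiagGcd q (v i) (v j) = Int.gcd (v i - v j) q := fun j hj =>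
    if_neg (sub_ne_zero.1 (prod_ne_zero_iff.1 h j hj))
  rw [prod_congr rfl hoff]
  refine Nat.le_of_dvd (prod_pos fun j _ => Int.gcd_pos_of_ne_zero_right _ ?_)
    (Int.gcd_prod_dvd_prod_gcd _ _ q)
  exact_mod_cast hq

theorem sum_piFinset_prod_erase {ι α R : Type*} [Fintype ι] [DecidableEq ι] [DecidableEq α]
    [CommSemiring R] (s : Finset α) (g : α → α → R) (i : ι) :
    ∑ v ∈ Fintype.piFinset (fun _ => s), ∏ j ∈ univ.erase i, g (v i) (v j) =
      ∑ a ∈ s, (∑ b ∈ s, g a b) ^ (Fintype.card ι - 1) := by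
  -- pinning the `i`-th coordinate to `a` by a factor `[b = a]` turns each term into a full product
  set F : α → ι → α → R := fun a j b => if j = i then (if b = a then 1 else 0) else g a b
  have hF : ∀ a (v : ι → α), ∏ j, F a j (v j) =
      (if v i = a then 1 else 0) * ∏ j ∈ univ.erase i, g a (v j) := fun a v => by
    rw [← mul_prod_erase _ _ (mem_univ i)]
    congr 1
    · simp [F]
    · exact prod_congr rfl fun j hj => if_neg (ne_of_mem_erase hj)
  calc ∑ v ∈ Fintype.piFinset (fun _ => s), ∏ j ∈ univ.erase i, g (v i) (v j)
      = ∑ v ∈ Fintype.piFinset (fun _ => s), ∑ a ∈ s, ∏ j, F a j (v j) := by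
        refine sum_congr rfl fun v hv => ?_
        simp only [hF, ite_mul, one_mul, zero_mul]
        rw [sum_ite_eq, if_pos (Fintype.mem_piFinset.1 hv i)]
    _ = ∑ a ∈ s, ∏ j, ∑ b ∈ s, F a j b := by
        rw [sum_comm]
        exact sum_congr rfl fun a _ => sum_prod_piFinset s (F a)
    _ = ∑ a ∈ s, (∑ b ∈ s, g a b) ^ (Fintype.card ι - 1) := by
        refine sum_congr rfl fun a ha => ?_
        rw [← mul_prod_erase _ _ (mem_univ i),
          prod_congr rfl fun j hj => sum_congr rfl fun b _ => if_neg (ne_of_mem_erase hj)]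
        simp [F, ha, card_erase_of_mem]

theorem Fintype.sum_piFinset_const_succ {α M : Type*} [DecidableEq α] [AddCommMonoid M] {n : ℕ}
    (s : Finset α) (F : (Fin (n + 1) → α) → M) :
    ∑ v ∈ piFinset (fun _ => s), F v =
      ∑ a ∈ s, ∑ w ∈ piFinset (fun _ : Fin n => s), F (Fin.cons a w) := by
  have h := filter_piFinset_eq_map_consEquiv (fun _ : Fin (n + 1) => s) (fun _ => True)
  rw [filter_true, filter_true] at h
  rw [h, sum_map, sum_product]
  rfl

theorem Fintype.sum_piFinset_fin_four {α M : Type*} [DecidableEq α] [AddCommMonoid M]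
    (s : Finset α) (F : (Fin 4 → α) → M) :
    ∑ v ∈ piFinset (fun _ => s), F v = ∑ a ∈ s, ∑ b ∈ s, ∑ c ∈ s, ∑ d ∈ s, F ![a, b, c, d] := by
  simp only [sum_piFinset_const_succ, piFinset_of_isEmpty, univ_unique, sum_singleton]
  rfl

theorem sum_gcd_prod_sub_le {ι : Type*} [Fintype ι] [DecidableEq ι] {q : ℕ} (hq : q ≠ 0)
    (v : ι → ℤ) :
    ∑ i ∈ univ.filter (fun i => ∏ j ∈ univ.filter (fun j => j ≠ i), (v i - v j) ≠ 0),
        Int.gcd (∏ j ∈ univ.filter (fun j => j ≠ i), (v i - v j)) q ≤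
      ∑ i, ∏ j ∈ univ.erase i, offDiagGcd q (v i) (v j) := by
  simp only [filter_ne']
  exact (sum_le_sum fun i hi => gcd_prod_sub_le_prod_offDiagGcd hq v i (mem_filter.1 hi).2).trans
    (sum_le_sum_of_subset (filter_subset _ _))

theorem sum_piFinset_sum_prod_offDiagGcd_le {ι : Type*} [Fintype ι] [DecidableEq ι] {q : ℕ}
    (hq : q ≠ 0) (V : ℕ) :
    ∑ v ∈ Fintype.piFinset (fun _ : ι => Icc 1 V), ∑ i, ∏ j ∈ univ.erase i,
        offDiagGcd q (v i) (v j) ≤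
      Fintype.card ι * V * (2 * V * #q.divisors) ^ (Fintype.card ι - 1) := by
  have hrow : ∀ a ∈ Icc 1 V, ∑ b ∈ Icc 1 V, offDiagGcd q a b ≤ 2 * V * #q.divisors :=
    fun a ha => (sum_offDiagGcd_le (mem_Icc.1 ha).2).trans <| by
      rw [mul_assoc]
      exact Nat.mul_le_mul_left 2 (Nat.sum_Icc_gcd_le hq V)
  rw [sum_comm]
  calc ∑ i, ∑ v ∈ Fintype.piFinset (fun _ : ι => Icc 1 V), ∏ j ∈ univ.erase i,
        offDiagGcd q (v i) (v j)
      = ∑ _i : ι, ∑ a ∈ Icc 1 V, (∑ b ∈ Icc 1 V, offDiagGcd q a b) ^ (Fintype.card ι - 1) :=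
        sum_congr rfl fun i _ => sum_piFinset_prod_erase (Icc 1 V) (fun a b => offDiagGcd q a b) i
    _ ≤ ∑ _i : ι, ∑ _a ∈ Icc 1 V, (2 * V * #q.divisors) ^ (Fintype.card ι - 1) := by
        gcongr with i _ a ha
        exact hrow a ha
    _ = Fintype.card ι * V * (2 * V * #q.divisors) ^ (Fintype.card ι - 1) := by
        simp [sum_const, Nat.card_Icc, mul_assoc]

theorem stmt_10 :
    ∀ ε : ℝ, 0 < ε → ∃ C : ℝ, 0 < C ∧
      ∀ (q V : ℕ), 0 < q → 0 < V →
        (∑ v₁ ∈ Finset.Icc 1 V, ∑ v₂ ∈ Finset.Icc 1 V,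
          ∑ v₃ ∈ Finset.Icc 1 V, ∑ v₄ ∈ Finset.Icc 1 V,
            if 3 ≤ ({v₁, v₂, v₃, v₄} : Finset ℕ).card then
              (∑ i ∈ Finset.univ.filter (fun i : Fin 4 =>
                  (∏ j ∈ Finset.univ.filter (fun j : Fin 4 => j ≠ i),
                    ((![v₁, v₂, v₃, v₄] i : ℤ) - (![v₁, v₂, v₃, v₄] j : ℤ))) ≠ 0),
                (Int.gcd (∏ j ∈ Finset.univ.filter (fun j : Fin 4 => j ≠ i),
                    ((![v₁, v₂, v₃, v₄] i : ℤ) - (![v₁, v₂, v₃, v₄] j : ℤ))) q : ℝ))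
            else 0) ≤
          C * (V : ℝ) ^ 4 * (q : ℝ) ^ ε := by
  intro ε hε
  obtain ⟨C, hC, hτ⟩ := card_divisors_le_mul_rpow (ε := ε / 3) (by positivity)
  refine ⟨32 * C ^ 3, by positivity, fun q V hq _ => ?_⟩
  have hτ3 : (#q.divisors : ℝ) ^ 3 ≤ C ^ 3 * (q : ℝ) ^ ε := by
    calc (#q.divisors : ℝ) ^ 3 ≤ (C * (q : ℝ) ^ (ε / 3)) ^ 3 := by gcongr; exact hτ q hq.ne'
      _ = C ^ 3 * (q : ℝ) ^ ε := by
        rw [mul_pow, ← Real.rpow_mul_natCast (by positivity)]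
        ring_nf
  calc _ ≤ ∑ v₁ ∈ Icc 1 V, ∑ v₂ ∈ Icc 1 V, ∑ v₃ ∈ Icc 1 V, ∑ v₄ ∈ Icc 1 V,
        ((∑ i, ∏ j ∈ univ.erase i,
          offDiagGcd q (![v₁, v₂, v₃, v₄] i) (![v₁, v₂, v₃, v₄] j) : ℕ) : ℝ) := by
        gcongr with v₁ _ v₂ _ v₃ _ v₄ _
        split_ifs
        · exact_mod_cast sum_gcd_prod_sub_le hq.ne' (fun i => (![v₁, v₂, v₃, v₄] i : ℤ))
        · positivity
    _ ≤ ((4 * V * (2 * V * #q.divisors) ^ 3 : ℕ) : ℝ) := by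
        have h := sum_piFinset_sum_prod_offDiagGcd_le (ι := Fin 4) hq.ne' V
        simp only [Fintype.sum_piFinset_fin_four] at h
        exact_mod_cast h
    _ = 32 * (V : ℝ) ^ 4 * (#q.divisors : ℝ) ^ 3 := by push_cast; ring
    _ ≤ 32 * (V : ℝ) ^ 4 * (C ^ 3 * (q : ℝ) ^ ε) := by gcongr
    _ = 32 * C ^ 3 * (V : ℝ) ^ 4 * (q : ℝ) ^ ε := by ring
end
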